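/- Fix m ∈ ℝ and define g : (0, ∞) → ℝ by g(σ) = m Φ(m/σ) + σ φ(m/σ), where Φ and φ are the cumulative distribution function and probability density function of the standard normal distribution. Then g is differentiable on (0, ∞) with g′(σ) = φ(m/σ) > 0 for every σ > 0; in particular, g is strictly increasing on (0, ∞). -/

import Mathlib

open MeasureTheory

/-! Differentiating `m Φ(m/σ) + σ φ(m/σ)` with `Φ' = φ` and `φ'(u) = -u φ(u)`, the two terms
carrying `d(m/σ)/dσ` cancel, because `σ · (m/σ) = m`. What is left is `φ(m/σ) > 0`, and a
function with positive derivative on an interval is strictly increasing. -/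

/-- The probability density function `φ` of the standard normal distribution. -/
noncomputable def stdNormalPdf (x : ℝ) : ℝ :=
  (Real.sqrt (2 * Real.pi))⁻¹ * Real.exp (-x ^ 2 / 2)

/-- The cumulative distribution function `Φ` of the standard normal distribution. -/
noncomputable def stdNormalCdf (x : ℝ) : ℝ :=
  ∫ t in Set.Iic x, stdNormalPdf t

theorem hasDerivAt_integral_Iic {E : Type*} [NormedAddCommGroup E] [NormedSpace ℝ E]
    [CompleteSpace E] {f : ℝ → E} (hf : Integrable f) {x : ℝ} (hx : ContinuousAt f x) :
    HasDerivAt (fun y => ∫ t in Set.Iic y, f t) (f x) x := by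
  have split : ∀ y, ∫ t in Set.Iic y, f t = (∫ t in Set.Iic 0, f t) + ∫ t in (0 : ℝ)..y, f t :=
    fun y => by
      rw [intervalIntegral.integral_Iic_sub_Iic hf.integrableOn hf.integrableOn |>.symm,
        add_sub_cancel]
  rw [funext split]
  exact (intervalIntegral.integral_hasDerivAt_right hf.intervalIntegrable
    hf.aestronglyMeasurable.stronglyMeasurableAtFilter hx).const_add _

theorem stdNormalPdf_pos (x : ℝ) : 0 < stdNormalPdf x := by
  unfold stdNormalPdf
  positivity

theorem continuous_stdNormalPdf : Continuous stdNormalPdf := by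
  unfold stdNormalPdf
  fun_prop

theorem integrable_stdNormalPdf : Integrable stdNormalPdf := by
  refine ((integrable_exp_neg_mul_sq (b := 1 / 2) (by norm_num)).const_mul
    (Real.sqrt (2 * Real.pi))⁻¹).congr (ae_of_all _ fun x => ?_)
  simp only [stdNormalPdf]
  congr 2
  ring

theorem hasDerivAt_stdNormalPdf (x : ℝ) :
    HasDerivAt stdNormalPdf (-x * stdNormalPdf x) x := by
  have hexponent : HasDerivAt (fun y : ℝ => -y ^ 2 / 2) (-x) x := by
    refine (((hasDerivAt_pow 2 x).neg).div_const 2).congr_deriv ?_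
    ring
  refine ((hexponent.exp).const_mul (Real.sqrt (2 * Real.pi))⁻¹).congr_deriv ?_
  simp only [stdNormalPdf]
  ring

theorem hasDerivAt_stdNormalCdf (x : ℝ) :
    HasDerivAt stdNormalCdf (stdNormalPdf x) x :=
  hasDerivAt_integral_Iic integrable_stdNormalPdf continuous_stdNormalPdf.continuousAt

/-- Here `m = μ - f⁺` is the predicted mean improvement over the incumbent. -/
noncomputable def expectedImprovement (m σ : ℝ) : ℝ :=
  m * stdNormalCdf (m / σ) + σ * stdNormalPdf (m / σ)

theorem hasDerivAt_expectedImprovement (m : ℝ) {σ : ℝ} (hσ : σ ≠ 0) :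
    HasDerivAt (expectedImprovement m) (stdNormalPdf (m / σ)) σ := by
  have hratio : HasDerivAt (fun s : ℝ => m / s) (-m / σ ^ 2) σ := by
    simpa [div_eq_mul_inv, neg_div] using (hasDerivAt_inv hσ).const_mul m
  have hcdf := (hasDerivAt_stdNormalCdf (m / σ)).comp σ hratio
  have hpdf := (hasDerivAt_stdNormalPdf (m / σ)).comp σ hratio
  refine ((hcdf.const_mul m).add ((hasDerivAt_id σ).mul hpdf)).congr_deriv ?_
  simp only [id_eq, Function.comp_apply]
  field_simp
  ring

theorem strictMonoOn_expectedImprovement (m : ℝ) :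
    StrictMonoOn (expectedImprovement m) (Set.Ioi 0) := by
  have hderiv (σ : ℝ) (hσ : σ ∈ Set.Ioi 0) :
      HasDerivAt (expectedImprovement m) (stdNormalPdf (m / σ)) σ :=
    hasDerivAt_expectedImprovement m (ne_of_gt hσ)
  refine strictMonoOn_of_hasDerivWithinAt_pos (convex_Ioi 0)
    (fun σ hσ => (hderiv σ hσ).continuousAt.continuousWithinAt) ?_
    (fun σ _ => stdNormalPdf_pos (m / σ))
  rw [interior_Ioi]
  exact fun σ hσ => (hderiv σ hσ).hasDerivWithinAt

/-- **Expected improvement is strictly increasing in the predictive standard deviation.**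
For fixed `m`, the function `g(σ) = m Φ(m/σ) + σ φ(m/σ)` is differentiable on `(0, ∞)`
with derivative `g'(σ) = φ(m/σ) > 0`; in particular `g` is strictly increasing there. -/
theorem expected_improvement_strictMono_in_sigma (m : ℝ) :
    (∀ σ : ℝ, 0 < σ →
        HasDerivAt (fun s : ℝ => m * stdNormalCdf (m / s) + s * stdNormalPdf (m / s))
          (stdNormalPdf (m / σ)) σ ∧ 0 < stdNormalPdf (m / σ)) ∧
      StrictMonoOn (fun s : ℝ => m * stdNormalCdf (m / s) + s * stdNormalPdf (m / s))
        (Set.Ioi 0) := by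
  exact ⟨fun σ hσ => ⟨hasDerivAt_expectedImprovement m hσ.ne', stdNormalPdf_pos _⟩,
    strictMonoOn_expectedImprovement m⟩
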